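/- arXiv:2304.06149 — 10 statements merged into one kernel-verified Lean document; each statement's English description precedes it below -/
import Mathlib

section
/- Let R be an associative ring with unit and a, b ∈ R with b von Neumann regular (there exists y with byb = b). If rann(b) ⊆ rann(a) and Rb ⊆ Ra, then a is von Neumann regular. -/
theorem stmt4 {R : Type*} [Ring R] (a b y : R) (hb : b * y * b = b)
    (h1 : ∀ r : R, b * r = 0 → a * r = 0)
    (h2 : ∀ x : R, (∃ r : R, x = r * b) → ∃ r : R, x = r * a) :
    ∃ x : R, a * x * a = a := by
  obtain ⟨s, hs⟩ := h2 b ⟨1, (one_mul b).symm⟩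
  have hz : b * (y * b - 1) = 0 := by
    have : b * (y * b) = b := by rw [← mul_assoc, hb]
    rw [mul_sub, this, mul_one, sub_self]
  have ha : a * (y * b) = a := by
    have := h1 _ hz
    rw [mul_sub, mul_one, sub_eq_zero] at this
    exact this
  exact ⟨y * s, by rw [mul_assoc a (y * s) a, mul_assoc y s a, ← hs, ha]⟩
end

section
/- Let R be an associative ring with unit and a, b ∈ R such that ab has an inner inverse z (i.e., (ab)z(ab) = ab). Then ab·z·a = a if and only if abR = aR, and this holds if and only if lann(ab) = lann(a). -/
theorem stmt7 {R : Type*} [Ring R] (a b z : R) (hz : a * b * z * (a * b) = a * b) :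
    (a * b * z * a = a ↔ {x : R | ∃ r : R, x = a * b * r} = {x : R | ∃ r : R, x = a * r}) ∧
    (a * b * z * a = a ↔ {r : R | r * (a * b) = 0} = {r : R | r * a = 0}) := by
  constructor
  · constructor
    · intro h
      ext x
      constructor
      · rintro ⟨r, rfl⟩
        exact ⟨b * r, by noncomm_ring⟩
      · rintro ⟨r, rfl⟩
        exact ⟨z * a * r, by rw [← mul_assoc, ← mul_assoc, h]⟩
    · intro h
      have : a ∈ {x : R | ∃ r : R, x = a * b * r} := h ▸ ⟨1, by noncomm_ring⟩
      obtain ⟨r, hr⟩ := this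
      have key : a * b * z * (a * b * r) = a * b * r := by rw [← mul_assoc, hz]
      nth_rewrite 2 [hr]
      rw [key, ← hr]
  · constructor
    · intro h
      ext r
      constructor
      · intro hr
        have hr' : r * (a * b) = 0 := hr
        have : r * a = 0 := by
          calc r * a = r * (a * b * z * a) := by rw [h]
            _ = r * (a * b) * (z * a) := by noncomm_ring
            _ = 0 := by rw [hr', zero_mul]
        exact this
      · intro hr
        have hr' : r * a = 0 := hr
        show r * (a * b) = 0
        rw [← mul_assoc, hr', zero_mul]
    · intro h
      have hmem : (a * b * z - 1) ∈ {r : R | r * (a * b) = 0} := by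
        show (a * b * z - 1) * (a * b) = 0
        rw [sub_mul, one_mul, hz, sub_self]
      rw [h] at hmem
      have h2 : (a * b * z - 1) * a = 0 := hmem
      rw [sub_mul, one_mul, sub_eq_zero] at h2
      exact h2
end

section
/- Let R be an associative ring with unit, a ∈ R, and let S, T be right ideals of R. If x₁ and x₂ are both outer inverses of a (xᵢaxᵢ = xᵢ) with x₁R = x₂R = S and rann(x₁) = rann(x₂) = T, then x₁ = x₂. (Uniqueness of the {2}-inverse with prescribed right principal and right annihilator ideals.) -/
theorem stmt11 {R : Type*} [Ring R] (a : R) (S T : Set R)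
    (hS0 : (0:R) ∈ S) (hSadd : ∀ x ∈ S, ∀ y ∈ S, x + y ∈ S) (hSmul : ∀ x ∈ S, ∀ r : R, x * r ∈ S)
    (hT0 : (0:R) ∈ T) (hTadd : ∀ x ∈ T, ∀ y ∈ T, x + y ∈ T) (hTmul : ∀ x ∈ T, ∀ r : R, x * r ∈ T)
    (x₁ x₂ : R)
    (h₁ : x₁ * a * x₁ = x₁) (h₂ : x₂ * a * x₂ = x₂)
    (hR₁ : {r : R | ∃ s : R, r = x₁ * s} = S) (hR₂ : {r : R | ∃ s : R, r = x₂ * s} = S)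
    (hA₁ : {r : R | x₁ * r = 0} = T) (hA₂ : {r : R | x₂ * r = 0} = T) :
    x₁ = x₂ := by
  -- x₁ ∈ S = x₂R, so x₁ = x₂ * t
  have hx₁S : x₁ ∈ S := by
    rw [← hR₁]; exact ⟨a * x₁, by rw [← mul_assoc, h₁]⟩
  obtain ⟨t, ht⟩ : ∃ t : R, x₁ = x₂ * t := by rw [← hR₂] at hx₁S; exact hx₁S
  -- x₂ * a * x₁ = x₁
  have key1 : x₂ * a * x₁ = x₁ := by
    rw [ht, ← mul_assoc, h₂]
  -- a * x₁ - 1 ∈ T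
  have hmem : a * x₁ - 1 ∈ T := by
    rw [← hA₁]
    simp only [Set.mem_setOf_eq, mul_sub, mul_one, ← mul_assoc, h₁, sub_self]
  have key2 : x₂ * (a * x₁ - 1) = 0 := by rw [← hA₂] at hmem; exact hmem
  have : x₂ * a * x₁ = x₂ := by
    have := key2
    rw [mul_sub, mul_one, sub_eq_zero] at this
    rw [mul_assoc]; exact this
  rw [← key1, this]
end

section
/- Let R be an associative ring with unit, a ∈ R, and S, T right ideals of R. Suppose there exists x ∈ S such that: xas = s for all s ∈ S, 1 - ax ∈ T, and xt = 0 for all t ∈ T. Then x is an outer inverse of a (xax = x), xR = S, and rann(x) = T. -/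
theorem stmt12 {R : Type*} [Ring R] (a : R) (S T : Set R)
    (hS0 : (0:R) ∈ S) (hSadd : ∀ x ∈ S, ∀ y ∈ S, x + y ∈ S) (hSmul : ∀ x ∈ S, ∀ r : R, x * r ∈ S)
    (hT0 : (0:R) ∈ T) (hTadd : ∀ x ∈ T, ∀ y ∈ T, x + y ∈ T) (hTmul : ∀ x ∈ T, ∀ r : R, x * r ∈ T)
    (x : R) (hxS : x ∈ S)
    (h1 : ∀ s ∈ S, x * a * s = s)
    (h2 : 1 - a * x ∈ T)
    (h3 : ∀ t ∈ T, x * t = 0) :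
    x * a * x = x ∧ {r : R | ∃ s : R, r = x * s} = S ∧ {r : R | x * r = 0} = T := by
  refine ⟨h1 x hxS, ?_, ?_⟩
  · ext r
    constructor
    · rintro ⟨s, rfl⟩; exact hSmul x hxS s
    · intro hr; exact ⟨a * r, by rw [← mul_assoc, h1 r hr]⟩
  · ext r
    constructor
    · intro hr
      have : r = (1 - a * x) * r := by
        simp only [Set.mem_setOf_eq] at hr
        rw [sub_mul, one_mul, mul_assoc, hr, mul_zero, sub_zero]
      rw [this]; exact hTmul _ h2 r
    · exact h3 r
end

section
/- Let R be an associative ring with unit, a ∈ R, and S, T right ideals of R such that R = aS ⊕ T (as additive groups, i.e., R = aS + T and aS ∩ T = {0}) and rann(a) ∩ S = {0}, where aS = {as : s ∈ S}. Then there exists x ∈ S with xax = x, xR = S, and rann(x) = T. -/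
theorem stmt13 {R : Type*} [Ring R] (a : R) (S T : Set R)
    (hS0 : (0:R) ∈ S) (hSadd : ∀ x ∈ S, ∀ y ∈ S, x + y ∈ S) (hSmul : ∀ x ∈ S, ∀ r : R, x * r ∈ S)
    (hT0 : (0:R) ∈ T) (hTadd : ∀ x ∈ T, ∀ y ∈ T, x + y ∈ T) (hTmul : ∀ x ∈ T, ∀ r : R, x * r ∈ T)
    (hsum : ∀ r : R, ∃ s ∈ S, ∃ t ∈ T, r = a * s + t)
    (hint : ∀ s ∈ S, a * s ∈ T → a * s = 0)
    (hann : ∀ s ∈ S, a * s = 0 → s = 0) :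
    ∃ x ∈ S, x * a * x = x ∧ {r : R | ∃ s : R, r = x * s} = S ∧ {r : R | x * r = 0} = T := by
  obtain ⟨x, hxS, t, htT, h1⟩ := hsum 1
  have hax : a * x = 1 - t := by rw [eq_sub_iff_add_eq, ← h1]
  have hSsub : ∀ p ∈ S, ∀ q ∈ S, p - q ∈ S := by
    intro p hp q hq
    have := hSadd p hp (q * (-1)) (hSmul q hq (-1))
    simpa [mul_neg, sub_eq_add_neg] using this
  have hTsub : ∀ p ∈ T, ∀ q ∈ T, p - q ∈ T := by
    intro p hp q hq
    have := hTadd p hp (q * (-1)) (hTmul q hq (-1))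
    simpa [mul_neg, sub_eq_add_neg] using this
  -- key: x * a * x = x
  have hxax : x * a * x = x := by
    have hdS : x * a * x - x ∈ S := by
      have := hSsub _ (hSmul x hxS (a * x)) _ hxS
      simpa [mul_assoc] using this
    have hdT : a * (x * a * x - x) ∈ T := by
      have heq : a * (x * a * x - x) = t * t - t := by
        have : a * (x * a * x - x) = (a * x) * (a * x) - a * x := by noncomm_ring
        rw [this, hax]; noncomm_ring
      rw [heq]
      exact hTsub _ (hTmul t htT t) _ htT
    exact sub_eq_zero.mp (hann _ hdS (hint _ hdS hdT)) 
  -- every s ∈ S equals x * (a * s)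
  have hrep : ∀ s ∈ S, s = x * (a * s) := by
    intro s hs
    have hdS : s - x * (a * s) ∈ S := hSsub _ hs _ (hSmul x hxS (a * s))
    have hdT : a * (s - x * (a * s)) ∈ T := by
      have heq : a * (s - x * (a * s)) = t * (a * s) := by
        have : a * (s - x * (a * s)) = a * s - (a * x) * (a * s) := by noncomm_ring
        rw [this, hax]; noncomm_ring
      rw [heq]
      exact hTmul t htT (a * s)
    have h0 := sub_eq_zero.mp (hann _ hdS (hint _ hdS hdT))
    exact h0
  -- x kills T
  have hkill : ∀ r ∈ T, x * r = 0 := by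
    intro r hr
    have hS' : x * r ∈ S := hSmul x hxS r
    have hT' : a * (x * r) ∈ T := by
      have heq : a * (x * r) = r - t * r := by
        rw [← mul_assoc, hax]; noncomm_ring
      rw [heq]
      exact hTsub r hr _ (hTmul t htT r)
    exact hann _ hS' (hint _ hS' hT')
  refine ⟨x, hxS, hxax, ?_, ?_⟩
  · ext r
    constructor
    · rintro ⟨s, rfl⟩
      exact hSmul x hxS s
    · intro hr
      exact ⟨a * r, hrep r hr⟩
  · ext r
    constructor
    · intro hr
      obtain ⟨s, hs, t', ht', hrdec⟩ := hsum r
      have hxas : x * (a * s) = 0 := by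
        have hxr : x * r = x * (a * s) := by
          rw [hrdec, mul_add, hkill t' ht', add_zero]
        rw [← hxr]; exact hr
      have hasT : a * s ∈ T := by
        have h0 : a * s - t * (a * s) = 0 := by
          have : a * s - t * (a * s) = (a * x) * (a * s) := by rw [hax]; noncomm_ring
          rw [this, mul_assoc, hxas, mul_zero]
        have : a * s = t * (a * s) := sub_eq_zero.mp h0
        rw [this]; exact hTmul t htT (a * s)
      have h1' : a * s = 0 := hint s hs hasT
      have h2' : s = 0 := hann s hs h1'
      rw [hrdec, h2', mul_zero, zero_add]
      exact ht'
    · intro hr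
      exact hkill r hr
end

section
/- Let R be a *-ring and a, x ∈ R with axa = a and (ax)* = ax (x is a {1,3}-inverse of a). Then rann(ax) = rann(a*), and consequently R = aR ⊕ rann(a*) as additive groups. -/
theorem stmt15 {R : Type*} [Ring R] [StarRing R] (a x : R)
    (h1 : a * x * a = a) (h3 : star (a * x) = a * x) :
    ({r : R | a * x * r = 0} = {r : R | star a * r = 0}) ∧
    (∀ r : R, ∃ s t : R, star a * t = 0 ∧ r = a * s + t) ∧
    (∀ r : R, (∃ s : R, r = a * s) → star a * r = 0 → r = 0) := by
  have key : star a * (a * x) = star a := by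
    calc star a * (a * x) = star a * star (a * x) := by rw [h3]
    _ = star ((a * x) * a) := by rw [star_mul (a*x) a]
    _ = star a := by rw [h1]
  have fwd : ∀ r : R, a * x * r = 0 → star a * r = 0 := by
    intro r hr
    calc star a * r = star a * (a * x) * r := by rw [key]
    _ = star a * (a * x * r) := by noncomm_ring
    _ = 0 := by rw [hr, mul_zero]
  have bwd : ∀ r : R, star a * r = 0 → a * x * r = 0 := by
    intro r hr
    calc a * x * r = star (a * x) * r := by rw [h3]
    _ = star x * (star a * r) := by rw [star_mul]; noncomm_ring
    _ = 0 := by rw [hr, mul_zero]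
  refine ⟨Set.ext fun r => ⟨fwd r, bwd r⟩, ?_, ?_⟩
  · intro r
    refine ⟨x * r, r - a * x * r, ?_, by noncomm_ring⟩
    calc star a * (r - a * x * r) = star a * r - star a * (a * x) * r := by noncomm_ring
    _ = 0 := by rw [key]; noncomm_ring
  · rintro r ⟨s, rfl⟩ hr
    have := bwd _ hr
    calc a * s = a * x * a * s := by rw [h1]
    _ = a * x * (a * s) := by noncomm_ring
    _ = 0 := this
end

section
/- Let R be a *-ring and a, x ∈ R. Suppose axa = a, ax is idempotent with axR = aR and rann(ax) = rann(a*). Then (ax)* = ax, i.e., x is a {1,3}-inverse of a. -/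
theorem stmt16 {R : Type*} [Ring R] [StarRing R] (a x : R)
    (h1 : a * x * a = a) (hidem : (a * x) * (a * x) = a * x)
    (hR : {r : R | ∃ s : R, r = a * x * s} = {r : R | ∃ s : R, r = a * s})
    (hA : {r : R | a * x * r = 0} = {r : R | star a * r = 0}) :
    star (a * x) = a * x := by
  have k1 : a * x * (1 - a * x) = 0 := by
    rw [mul_sub, mul_one, hidem, sub_self]
  have k2 : star a * (1 - a * x) = 0 := by
    have := Set.ext_iff.mp hA (1 - a * x)
    exact this.mp k1
  have k3 : star a = star a * (a * x) := by
    rw [mul_sub, mul_one, sub_eq_zero] at k2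
    exact k2
  have k4 : star (a * x) * a = a := by
    have := congrArg star k3
    simpa [star_mul, mul_assoc] using this.symm
  have k5 : star (a * x) * (a * x) = a * x := by
    calc star (a * x) * (a * x) = star (a * x) * a * x := by rw [mul_assoc]
    _ = a * x := by rw [k4]
  have := congrArg star k5
  rw [star_mul, star_star] at this
  rw [← this, k5]
end

section
/- Let R be an associative ring with unit, a, b, c ∈ R, and suppose cab has an inner inverse z ((cab)z(cab) = cab). Set x = b z c. If rann(cab) = rann(b), then x is an outer inverse of a (xax = x) and xR = bR. Conversely, if xax = x and xR = bR, then rann(cab) = rann(b). -/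
theorem stmt17 {R : Type*} [Ring R] (a b c z : R)
    (hz : c * a * b * z * (c * a * b) = c * a * b) :
    (({r : R | c * a * b * r = 0} = {r : R | b * r = 0}) →
      (b * z * c) * a * (b * z * c) = b * z * c ∧
      {r : R | ∃ s : R, r = b * z * c * s} = {r : R | ∃ s : R, r = b * s}) ∧
    ((b * z * c) * a * (b * z * c) = b * z * c →
      {r : R | ∃ s : R, r = b * z * c * s} = {r : R | ∃ s : R, r = b * s} →
      {r : R | c * a * b * r = 0} = {r : R | b * r = 0}) := by
  constructor
  · intro h
    have hmem : (z * (c * a * b) - 1) ∈ {r : R | c * a * b * r = 0} := by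
      simp only [Set.mem_setOf_eq, mul_sub, mul_one]
      rw [← mul_assoc, hz, sub_self]
    rw [h] at hmem
    have key : b * z * (c * a * b) = b := by
      simp only [Set.mem_setOf_eq, mul_sub, mul_one, sub_eq_zero] at hmem
      rw [mul_assoc]; exact hmem
    constructor
    · calc (b * z * c) * a * (b * z * c) = (b * z * (c * a * b)) * z * c := by noncomm_ring
        _ = b * z * c := by rw [key]
    · ext r
      simp only [Set.mem_setOf_eq]
      constructor
      · rintro ⟨s, rfl⟩
        exact ⟨z * c * s, by noncomm_ring⟩
      · rintro ⟨s, rfl⟩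
        exact ⟨a * b * s, by rw [show b * z * c * (a * b * s) = b * z * (c * a * b) * s by noncomm_ring, key]⟩
  · intro hx h
    obtain ⟨s, hs⟩ : b ∈ {r : R | ∃ s : R, r = b * z * c * s} := by
      rw [h]; exact ⟨1, by rw [mul_one]⟩
    have key : b * z * (c * a * b) = b := by
      calc b * z * (c * a * b) = (b * z * c) * a * (b * z * c * s) := by rw [← hs]; noncomm_ring
        _ = (b * z * c) * a * (b * z * c) * s := by noncomm_ring
        _ = b * z * c * s := by rw [hx]
        _ = b := hs.symm
    ext r
    simp only [Set.mem_setOf_eq]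
    constructor
    · intro hr
      calc b * r = b * z * (c * a * b) * r := by rw [key]
        _ = b * z * (c * a * b * r) := by noncomm_ring
        _ = 0 := by rw [hr, mul_zero]
    · intro hr
      calc c * a * b * r = c * a * (b * r) := by noncomm_ring
        _ = 0 := by rw [hr, mul_zero]
end

section
/- Let R be an associative ring with unit and a, b, c ∈ R with (cab)z(cab) = cab for some z. Let x = b z c. Then x satisfies axa = a if and only if abR = aR and rann(cab) = rann(ab). -/
theorem stmt18 {R : Type*} [Ring R] (a b c z : R)
    (hz : c * a * b * z * (c * a * b) = c * a * b) :
    a * (b * z * c) * a = a ↔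
      ({r : R | ∃ s : R, r = a * b * s} = {r : R | ∃ s : R, r = a * s} ∧
       {r : R | c * a * b * r = 0} = {r : R | a * b * r = 0}) := by
  constructor
  · intro h
    have h' : a * b * (z * c * a) = a := by
      calc a * b * (z * c * a) = a * (b * z * c) * a := by noncomm_ring
        _ = a := h
    constructor
    · ext r
      simp only [Set.mem_setOf_eq]
      constructor
      · rintro ⟨s, rfl⟩; exact ⟨b * s, by noncomm_ring⟩
      · rintro ⟨s, rfl⟩
        exact ⟨z * c * a * s, by
          rw [show a * b * (z * c * a * s) = a * b * (z * c * a) * s by noncomm_ring, h']⟩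
    · ext r
      simp only [Set.mem_setOf_eq]
      constructor
      · intro hr
        have : a * b * r = a * b * (z * c * a) * b * r := by rw [h']
        rw [this]
        calc a * b * (z * c * a) * b * r = a * b * z * (c * a * b * r) := by noncomm_ring
          _ = 0 := by rw [hr, mul_zero]
      · intro hr
        calc c * a * b * r = c * (a * b * r) := by noncomm_ring
          _ = 0 := by rw [hr, mul_zero]
  · rintro ⟨h1, h2⟩
    have ha : a ∈ {r : R | ∃ s : R, r = a * b * s} := by
      rw [h1]; exact ⟨1, by noncomm_ring⟩
    obtain ⟨s, hs⟩ := ha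
    have hmem : (z * (c * a * b) - 1) ∈ {r : R | c * a * b * r = 0} := by
      simp only [Set.mem_setOf_eq, mul_sub, mul_one]
      rw [show c * a * b * (z * (c * a * b)) = c * a * b * z * (c * a * b) by noncomm_ring,
        hz, sub_self]
    rw [h2] at hmem
    simp only [Set.mem_setOf_eq, mul_sub, mul_one, sub_eq_zero] at hmem
    have key : a * b * z * (c * a * b) = a * b := by
      rw [show a * b * z * (c * a * b) = a * b * (z * (c * a * b)) by noncomm_ring, hmem]
    have hfin : a * (b * z * c) * (a * b * s) = a * b * s := by
      calc a * (b * z * c) * (a * b * s) = a * b * z * (c * a * b) * s := by noncomm_ring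
        _ = a * b * s := by rw [key]
    rw [← hs] at hfin
    exact hfin
end

section
/- Let R be an associative ring with unit, a ∈ R, and p, q idempotents of R. Suppose a(1-p)R ⊆ qR and there exists x ∈ R with xap = p, ax = 1 - q, and xq = 0. Then xax = x, xa = p, and ax = 1 - q (so x is the Djordjević–Wei (p,q)-inverse of a). -/
theorem stmt19 {R : Type*} [Ring R] (a p q : R) (hp : p * p = p) (hq : q * q = q)
    (h1 : ∀ r : R, ∃ s : R, a * (1 - p) * r = q * s)
    (x : R) (hx1 : x * a * p = p) (hx2 : a * x = 1 - q) (hx3 : x * q = 0) :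
    x * a * x = x ∧ x * a = p ∧ a * x = 1 - q := by
  obtain ⟨s, hs⟩ := h1 1
  rw [mul_one] at hs
  have hxa : x * a = p := by
    have h : x * (a * (1 - p)) = x * (q * s) := by rw [hs]
    rw [← mul_assoc, ← mul_assoc, hx3, zero_mul] at h
    rw [mul_sub, mul_one, mul_assoc, sub_eq_zero] at h
    rw [h, ← mul_assoc, hx1]
  refine ⟨?_, hxa, hx2⟩
  rw [mul_assoc, hx2, mul_sub, mul_one, hx3, sub_zero]
end
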